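/- arXiv:1410.7789 — 3 statements merged into one kernel-verified Lean document; each statement's English description precedes it below -/
import Mathlib

section
/- Let d, n be positive integers with n ≥ 2. Define ν₁ = 1 and νₛ = 2^((d+1)^(s-2)) for 2 ≤ s ≤ n. If 𝐢, 𝐣 ∈ ℤ≥0ⁿ satisfy |𝐢|₁ = |𝐣|₁ and 𝐢 ≠ 𝐣, then ν^𝐢 ≠ ν^𝐣, where ν^𝐢 = ν₁^{i₁} ⋯ νₙ^{iₙ}. -/
open Finset

lemma digits_unique (d : ℕ) : ∀ (m : ℕ) (l r : Fin m → ℕ),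
    (∀ v, l v ≤ d) → (∀ v, r v ≤ d) →
    (∑ v, l v * (d+1)^(v:ℕ)) = (∑ v, r v * (d+1)^(v:ℕ)) → ∀ v, l v = r v := by
  intro m
  induction m with
  | zero => intro l r _ _ _ v; exact absurd v.2 (by omega)
  | succ m ih =>
    intro l r hl hr hs v
    have hrw : ∀ (f : Fin (m+1) → ℕ), (∑ v, f v * (d+1)^(v:ℕ)) =
        f 0 + (d+1) * ∑ v : Fin m, f v.succ * (d+1)^(v:ℕ) := by
      intro f
      rw [Fin.sum_univ_succ, Finset.mul_sum]
      simp only [Fin.val_zero, pow_zero, mul_one, Fin.val_succ]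
      congr 1
      apply Finset.sum_congr rfl
      intro x _
      rw [pow_succ]
      ring
    rw [hrw l, hrw r] at hs
    have h0 : l 0 = r 0 := by
      have hl0 := hl 0
      have hr0 := hr 0
      have h := congrArg (· % (d+1)) hs
      simp only [Nat.add_mul_mod_self_left] at h
      rwa [Nat.mod_eq_of_lt (by omega), Nat.mod_eq_of_lt (by omega)] at h
    have htail : (∑ v : Fin m, l v.succ * (d+1)^(v:ℕ)) =
        ∑ v : Fin m, r v.succ * (d+1)^(v:ℕ) := by
      rw [h0] at hs
      have := Nat.add_left_cancel hs
      exact Nat.eq_of_mul_eq_mul_left (by omega) this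
    refine Fin.cases h0 ?_ v
    intro w
    exact ih (fun v => l v.succ) (fun v => r v.succ) (fun v => hl _) (fun v => hr _) htail w

theorem stmt_0 (d n : ℕ) (hd : 1 ≤ d) (hn : 2 ≤ n)
    (ν : Fin n → ℝ)
    (hν0 : ν ⟨0, by omega⟩ = 1)
    (hνs : ∀ s : Fin n, 1 ≤ s.val → ν s = 2 ^ ((d + 1) ^ (s.val - 1)))
    (i j : Fin n → ℕ)
    (hsum : ∑ v, i v = ∑ v, j v)
    (hdeg : ∑ v, j v ≤ d)
    (hne : i ≠ j) :
    ∏ v, ν v ^ i v ≠ ∏ v, ν v ^ j v := by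
  intro heq
  obtain ⟨m, rfl⟩ : ∃ m, n = m + 1 := ⟨n - 1, by omega⟩
  set e : Fin (m+1) → ℕ := fun v => if v.val = 0 then 0 else (d+1)^(v.val - 1) with he
  have hνe : ∀ v, ν v = 2 ^ e v := by
    intro v
    by_cases hv : v.val = 0
    · have : v = ⟨0, by omega⟩ := Fin.ext hv
      rw [this, hν0, he]; simp
    · rw [hνs v (by omega), he]; simp [hv]
  have key : ∀ f : Fin (m+1) → ℕ, (∏ v, ν v ^ f v) = (2:ℝ) ^ (∑ v, f v * e v) := by
    intro f
    rw [← Finset.prod_pow_eq_pow_sum]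
    apply Finset.prod_congr rfl
    intro v _
    rw [hνe v, ← pow_mul, mul_comm]
  rw [key i, key j] at heq
  have hnat : (∑ v, i v * e v) = ∑ v, j v * e v := by
    have h2 : (((2:ℕ)^(∑ v, i v * e v) : ℕ) : ℝ) = (((2:ℕ)^(∑ v, j v * e v) : ℕ) : ℝ) := by
      push_cast; exact heq
    exact Nat.pow_right_injective le_rfl (Nat.cast_injective h2)
  have hsplit : ∀ f : Fin (m+1) → ℕ, (∑ v, f v * e v) =
      ∑ v : Fin m, f v.succ * (d+1)^(v:ℕ) := by
    intro f
    rw [Fin.sum_univ_succ]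
    simp only [he]
    simp [Fin.val_succ]
  rw [hsplit i, hsplit j] at hnat
  have hib : ∀ v, i v ≤ d := fun v =>
    le_trans (le_trans (Finset.single_le_sum (fun w _ => Nat.zero_le _) (Finset.mem_univ v))
      (le_of_eq hsum)) hdeg
  have hjb : ∀ v, j v ≤ d := fun v =>
    le_trans (Finset.single_le_sum (fun w _ => Nat.zero_le _) (Finset.mem_univ v)) hdeg
  have htail : ∀ v : Fin m, i v.succ = j v.succ :=
    digits_unique d m (fun v => i v.succ) (fun v => j v.succ)
      (fun v => hib _) (fun v => hjb _) hnat
  have h0 : i 0 = j 0 := by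
    rw [Fin.sum_univ_succ, Fin.sum_univ_succ] at hsum
    rw [Finset.sum_congr rfl (fun v _ => htail v)] at hsum
    omega
  exact hne (funext (fun v => Fin.cases h0 htail v))
end

section
/- Let η > 0 and 0 < ρ ≤ η. Define K₋(α) = sin(παρ)·sin(πα(2η − ρ))/(π²α²ρ). Then for every real t, 0 ≤ ∫_ℝ e(αt) K₋(α) dα ≤ U_η(t) ≤ ∫_ℝ e(αt) K₊(α) dα ≤ 1, where K₊(α) = sin(παρ)·sin(πα(2η + ρ))/(π²α²ρ), U_η(t) = 1 if |t| < η and 0 otherwise, and e(x) = e^{2πix}. -/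
open Real MeasureTheory Set Convolution FourierTransform ContinuousLinearMap

/-!
Write `1_a` for the indicator of `[-a, a]`. Its Fourier transform is `sin (2πξa) / (πξ)`, so
`sin (2πξa) sin (2πξc) / (π²ξ²)` is the Fourier transform of the convolution `1_a ⋆ 1_c`, whose
value at `t` is the length of `[-a, a] ∩ [t - c, t + c]`: a trapezoid of height `2a` (for
`0 ≤ a ≤ c`), equal to `2a` on `|t| ≤ c - a` and vanishing for `|t| ≥ a + c`. This kernel is
`O(1/(1 + ξ²))`, hence integrable, and Fourier inversion identifies `∫ e(ξt) K(ξ) dξ` with the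
trapezoid. With `a = ρ/2` and `c = η ∓ ρ/2` the two trapezoids, divided by `ρ`, sit below and above
the indicator of `(-η, η)`.
-/

theorem fourier_indicator_Icc {a : ℝ} (ha : 0 ≤ a) {ξ : ℝ} (hξ : ξ ≠ 0) :
    𝓕 ((Icc (-a) a).indicator (1 : ℝ → ℂ)) ξ = (sin (2 * π * ξ * a) / (π * ξ) : ℝ) := by
  set c : ℂ := -2 * π * ξ * Complex.I
  have hc : c ≠ 0 := by simp [c, hξ, Real.pi_ne_zero]
  have hintegrand : (fun v : ℝ => Complex.exp (↑(-2 * π * v * ξ) * Complex.I) •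
      (Icc (-a) a).indicator (1 : ℝ → ℂ) v) = (Icc (-a) a).indicator fun v => Complex.exp (c * v) := by
    ext v
    by_cases hv : v ∈ Icc (-a) a
    · simp only [indicator_of_mem hv, Pi.one_apply, smul_eq_mul, mul_one, c]
      push_cast; ring_nf
    · simp [indicator_of_notMem hv]
  rw [Real.fourier_real_eq_integral_exp_smul, hintegrand, integral_indicator measurableSet_Icc,
    integral_Icc_eq_integral_Ioc, ← intervalIntegral.integral_of_le (by linarith),
    integral_exp_mul_complex hc, div_eq_iff hc]
  have hx := Complex.two_sin (2 * π * ξ * a)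
  have hξ' : (ξ : ℂ) ≠ 0 := by exact_mod_cast hξ
  have hπ : (π : ℂ) ≠ 0 := by exact_mod_cast Real.pi_ne_zero
  rw [show c * a = -(2 * π * ξ * a : ℂ) * Complex.I by simp only [c]; ring,
    show c * ((-a : ℝ) : ℂ) = (2 * π * ξ * a : ℂ) * Complex.I by simp only [c]; push_cast; ring]
  rw [show ((sin (2 * π * ξ * a) / (π * ξ) : ℝ) : ℂ) * c = -(2 * Complex.sin (2 * π * ξ * a)) * Complex.I by
    simp only [c]; push_cast; field_simp, hx]
  ring_nf
  rw [Complex.I_sq]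
  ring

/-- The length of `[-a, a] ∩ [t - c, t + c]`. -/
noncomputable def overlap (a c t : ℝ) : ℝ := max (min a (t + c) - max (-a) (t - c)) 0

theorem convolution_indicator_Icc (a c t : ℝ) :
    ((Icc (-a) a).indicator (1 : ℝ → ℂ) ⋆[mul ℂ ℂ] (Icc (-c) c).indicator 1) t = overlap a c t := by
  have hshift (x : ℝ) : (Icc (-c) c).indicator (1 : ℝ → ℂ) (t - x) =
      (Icc (t - c) (t + c)).indicator 1 x := by
    simp only [indicator_apply, mem_Icc]
    congr 1
    exact propext ⟨fun h => ⟨by linarith, by linarith⟩, fun h => ⟨by linarith, by linarith⟩⟩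
  have hprod (x : ℝ) : (Icc (-a) a).indicator (1 : ℝ → ℂ) x * (Icc (t - c) (t + c)).indicator 1 x =
      (Icc (max (-a) (t - c)) (min a (t + c))).indicator 1 x := by
    rw [← Icc_inter_Icc, inter_indicator_one, Pi.mul_apply]
  simp only [convolution_def, mul_apply', hshift, hprod]
  rw [integral_indicator measurableSet_Icc]
  simp [overlap, Real.volume_real_Icc]

theorem integrable_indicator_Icc (a : ℝ) : Integrable ((Icc (-a) a).indicator (1 : ℝ → ℂ)) :=
  (integrable_indicator_iff measurableSet_Icc).2 (integrableOn_const measure_Icc_lt_top.ne)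

theorem overlap_eq_convolution (a c : ℝ) : (fun t => (overlap a c t : ℂ)) =
    (Icc (-a) a).indicator (1 : ℝ → ℂ) ⋆[mul ℂ ℂ] (Icc (-c) c).indicator 1 :=
  funext fun t => (convolution_indicator_Icc a c t).symm

theorem continuous_overlap (a c : ℝ) : Continuous (overlap a c) := by
  unfold overlap; fun_prop

theorem overlap_nonneg (a c t : ℝ) : 0 ≤ overlap a c t := le_max_right _ _

theorem overlap_le (a c t : ℝ) (ha : 0 ≤ a) : overlap a c t ≤ 2 * a :=
  max_le (by linarith [min_le_left a (t + c), le_max_left (-a) (t - c)]) (by linarith)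

theorem overlap_eq_zero {a c t : ℝ} (ht : a + c ≤ |t|) : overlap a c t = 0 := by
  refine max_eq_right ?_
  rcases le_abs.1 ht with h | h
  · linarith [min_le_left a (t + c), le_max_right (-a) (t - c)]
  · linarith [min_le_right a (t + c), le_max_left (-a) (t - c)]

theorem overlap_eq_two_mul {a c t : ℝ} (ha : 0 ≤ a) (ht : |t| ≤ c - a) : overlap a c t = 2 * a := by
  obtain ⟨h₁, h₂⟩ := abs_le.1 ht
  rw [overlap, min_eq_left (by linarith), max_eq_left (show t - c ≤ -a by linarith), sub_neg_eq_add,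
    ← two_mul, max_eq_left (by linarith)]

-- At `ξ = 0` this takes the junk value `0` instead of the limit `4ac`.
noncomputable def overlapKernel (a c ξ : ℝ) : ℝ :=
  sin (2 * π * ξ * a) * sin (2 * π * ξ * c) / (π ^ 2 * ξ ^ 2)

theorem fourier_overlap {a c : ℝ} (ha : 0 ≤ a) (hc : 0 ≤ c) {ξ : ℝ} (hξ : ξ ≠ 0) :
    𝓕 (fun t => (overlap a c t : ℂ)) ξ = overlapKernel a c ξ := by
  rw [overlap_eq_convolution, Real.fourier_mul_convolution_eq (integrable_indicator_Icc a)
    (integrable_indicator_Icc c), fourier_indicator_Icc ha hξ, fourier_indicator_Icc hc hξ,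
    overlapKernel]
  push_cast
  ring

theorem abs_overlapKernel_mul_le (a c ξ : ℝ) :
    |overlapKernel a c ξ| * (1 + ξ ^ 2) ≤ 4 * |a * c| + 1 / π ^ 2 := by
  rcases eq_or_ne ξ 0 with rfl | hξ
  · rw [show overlapKernel a c 0 = 0 by simp [overlapKernel], abs_zero, zero_mul]
    positivity
  rw [overlapKernel]
  set s := sin (2 * π * ξ * a) * sin (2 * π * ξ * c)
  have hd : 0 < π ^ 2 * ξ ^ 2 := by positivity
  have hs_small : |s| ≤ 4 * |a * c| * (π ^ 2 * ξ ^ 2) := calc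
    |s| ≤ |2 * π * ξ * a| * |2 * π * ξ * c| := by
      rw [abs_mul]; exact mul_le_mul abs_sin_le_abs abs_sin_le_abs (abs_nonneg _) (abs_nonneg _)
    _ = 4 * |a * c| * (π ^ 2 * ξ ^ 2) := by
      rw [← abs_mul, show 2 * π * ξ * a * (2 * π * ξ * c) = 4 * (a * c) * (π ^ 2 * ξ ^ 2) by ring,
        abs_mul, abs_of_pos hd, abs_mul, abs_of_pos four_pos]
  have hs_one : |s| ≤ 1 := by
    rw [abs_mul]; exact mul_le_one₀ (abs_sin_le_one _) (abs_nonneg _) (abs_sin_le_one _)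
  calc _ = |s| / (π ^ 2 * ξ ^ 2) + |s| / π ^ 2 := by
        rw [abs_div, abs_of_pos hd]; field_simp
    _ ≤ 4 * |a * c| + 1 / π ^ 2 := by
        gcongr
        exact div_le_of_le_mul₀ hd.le (by positivity) hs_small

theorem integrable_overlapKernel (a c : ℝ) : Integrable (overlapKernel a c) := by
  refine (integrable_inv_one_add_sq.const_mul (4 * |a * c| + 1 / π ^ 2)).mono'
    (Measurable.aestronglyMeasurable (by unfold overlapKernel; fun_prop)) (.of_forall fun ξ => ?_)
  rw [Real.norm_eq_abs, ← div_eq_mul_inv, le_div_iff₀ (by positivity)]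
  exact abs_overlapKernel_mul_le a c ξ

theorem integral_exp_mul_overlapKernel {a c : ℝ} (ha : 0 ≤ a) (hc : 0 ≤ c) (t : ℝ) :
    ∫ ξ : ℝ, Complex.exp (2 * π * Complex.I * ξ * t) * (overlapKernel a c ξ : ℂ) = overlap a c t := by
  have hfourier : 𝓕 (fun t => (overlap a c t : ℂ)) =ᵐ[volume] fun ξ => (overlapKernel a c ξ : ℂ) := by
    filter_upwards [Measure.ae_ne volume 0] with ξ hξ using fourier_overlap ha hc hξ
  have hintegrable : Integrable fun t => (overlap a c t : ℂ) := by
    rw [overlap_eq_convolution]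
    exact (integrable_indicator_Icc a).integrable_convolution _ (integrable_indicator_Icc c)
  have hinv := hintegrable.fourierInv_fourier_eq (v := t)
    ((integrable_overlapKernel a c).ofReal.congr hfourier.symm)
    (Complex.continuous_ofReal.comp (continuous_overlap a c)).continuousAt
  rw [← hinv, fourierInv_eq']
  refine integral_congr_ae ?_
  filter_upwards [hfourier] with ξ hξ
  rw [hξ, smul_eq_mul]
  congr 2
  simp only [RCLike.inner_apply, conj_trivial]
  push_cast
  ring

theorem integral_exp_mul_sin_mul_sin_div {b d : ℝ} (hb : 0 < b) (hd : 0 ≤ d) (t : ℝ) :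
    ∫ α : ℝ, Complex.exp (2 * π * Complex.I * α * t) *
        ((sin (π * α * b) * sin (π * α * d) / (π ^ 2 * α ^ 2 * b) : ℝ) : ℂ) =
      ((overlap (b / 2) (d / 2) t / b : ℝ) : ℂ) := by
  have hkernel (α : ℝ) : sin (π * α * b) * sin (π * α * d) / (π ^ 2 * α ^ 2 * b) =
      overlapKernel (b / 2) (d / 2) α / b := by
    rw [overlapKernel, div_div]; ring_nf
  simp_rw [hkernel, Complex.ofReal_div, mul_div_assoc']
  rw [integral_div, integral_exp_mul_overlapKernel (by linarith) (by linarith)]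

theorem stmt_7 (η ρ : ℝ) (hρ : 0 < ρ) (hρη : ρ ≤ η) (t : ℝ) :
    let Kminus : ℝ → ℝ := fun α =>
      Real.sin (π * α * ρ) * Real.sin (π * α * (2 * η - ρ)) / (π ^ 2 * α ^ 2 * ρ)
    let Kplus : ℝ → ℝ := fun α =>
      Real.sin (π * α * ρ) * Real.sin (π * α * (2 * η + ρ)) / (π ^ 2 * α ^ 2 * ρ)
    let U : ℝ := if |t| < η then 1 else 0
    let Iminus : ℂ := ∫ α : ℝ, Complex.exp (2 * π * Complex.I * α * t) * (Kminus α : ℂ)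
    let Iplus : ℂ := ∫ α : ℝ, Complex.exp (2 * π * Complex.I * α * t) * (Kplus α : ℂ)
    Iminus.im = 0 ∧ Iplus.im = 0 ∧
      0 ≤ Iminus.re ∧ Iminus.re ≤ U ∧ U ≤ Iplus.re ∧ Iplus.re ≤ 1 := by
  intro Kminus Kplus U Iminus Iplus
  have hminus : Iminus = ((overlap (ρ / 2) ((2 * η - ρ) / 2) t / ρ : ℝ) : ℂ) :=
    integral_exp_mul_sin_mul_sin_div hρ (by linarith) t
  have hplus : Iplus = ((overlap (ρ / 2) ((2 * η + ρ) / 2) t / ρ : ℝ) : ℂ) :=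
    integral_exp_mul_sin_mul_sin_div hρ (by linarith) t
  simp only [hminus, hplus, Complex.ofReal_im, Complex.ofReal_re, true_and, U]
  have hle_one (c : ℝ) : overlap (ρ / 2) c t / ρ ≤ 1 :=
    (div_le_one hρ).2 ((overlap_le _ _ _ (by linarith)).trans_eq (by ring))
  refine ⟨div_nonneg (overlap_nonneg _ _ _) hρ.le, ?_, ?_, hle_one _⟩
  · split_ifs with ht
    · exact hle_one _
    · rw [overlap_eq_zero (by linarith), zero_div]
  · split_ifs with ht
    · rw [overlap_eq_two_mul (by linarith) (by linarith), mul_div_cancel₀ _ two_ne_zero, div_self hρ.ne']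
    · exact div_nonneg (overlap_nonneg _ _ _) hρ.le
end

section
/- Let μ be irrational, d ≥ 2, R ≥ 1, and 0 < V ≤ W. For α ∈ ℝ^R and P ≥ 1, let ℱ(α; P) be the supremum over q, s ∈ ℕ with q ≤ C·s (C ≥ 1 fixed) and 𝐚, 𝐛 ∈ ℤ^R of (q + P^d max_k|qα_k − a_k|)^{-1} · (s + P^{d−1} max_k|sμα_k − b_k|)^{-1}. Then sup{ℱ(α; P) : V ≤ |α| ≤ W} → 0 as P → ∞. -/
open Filter

/-- The function `ℱ(α; P)` of the paper: the supremum over `q ≤ C·s` and integer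
vectors `𝐚, 𝐛` of `(q + P^d max_k |qα_k − a_k|)⁻¹ (s + P^{d−1} max_k |sμα_k − b_k|)⁻¹`. -/
noncomputable def scriptF (R d : ℕ) (C μ : ℝ) (α : Fin R → ℝ) (P : ℝ) : ℝ :=
  sSup {x : ℝ | ∃ (q s : ℕ) (a b : Fin R → ℤ), 0 < q ∧ 0 < s ∧ (q : ℝ) ≤ C * s ∧
    x = ((q : ℝ) + P ^ d * ⨆ k, |(q : ℝ) * α k - a k|)⁻¹ *
        ((s : ℝ) + P ^ (d - 1) * ⨆ k, |(s : ℝ) * μ * α k - b k|)⁻¹}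

lemma aux_sup_abs_nonneg {R : ℕ} (hR : 1 ≤ R) (f : Fin R → ℝ) : 0 ≤ ⨆ k, |f k| :=
  le_ciSup_of_le (Set.finite_range _).bddAbove ⟨0, hR⟩ (abs_nonneg _)

set_option maxHeartbeats 1000000 in
lemma key_bound (μ : ℝ) (hμ : Irrational μ) (d R : ℕ) (hd : 2 ≤ d) (hR : 1 ≤ R)
    (V W : ℝ) (hV : 0 < V) (hVW : V ≤ W) (ε : ℝ) (hε : 0 < ε) :
    ∃ T : ℝ, 1 ≤ T ∧ ∀ P : ℝ, T ≤ P → ∀ α : Fin R → ℝ, V ≤ (⨆ k, |α k|) → (⨆ k, |α k|) ≤ W →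
      ∀ (q s : ℕ) (a b : Fin R → ℤ), 0 < q → 0 < s →
        ((q : ℝ) + P ^ d * ⨆ k, |(q : ℝ) * α k - a k|)⁻¹ *
        ((s : ℝ) + P ^ (d - 1) * ⨆ k, |(s : ℝ) * μ * α k - b k|)⁻¹ ≤ ε := by
  have hRnon : Nonempty (Fin R) := ⟨⟨0, hR⟩⟩
  set K : ℝ := ε⁻¹ with hKdef
  have hK : 0 < K := inv_pos.mpr hε
  have hμ0 : 0 ≤ |μ| := abs_nonneg μ
  have hW : 0 < W := lt_of_lt_of_le hV hVW
  set M : ℝ := K * (|μ| + 1) * (W + 1) with hMdef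
  have hM : 0 < M := by positivity
  set N : ℕ := ⌈M⌉₊ + 1 with hNdef
  have hMN : M ≤ (N : ℝ) := by
    have := Nat.le_ceil M
    push_cast [hNdef]
    linarith
  have hN1 : 1 ≤ N := by omega
  -- the finite set of candidate pairs
  set S : Finset (ℤ × ℤ) :=
    (Finset.Icc (-(N : ℤ)^2) ((N : ℤ)^2) ×ˢ Finset.Icc (-(N : ℤ)^2) ((N : ℤ)^2)).filter
      (fun p => p.2 ≠ 0) with hSdef
  have hSne : S.Nonempty := by
    refine ⟨(0, 1), ?_⟩
    have h1 : (1 : ℤ) ≤ (N : ℤ)^2 := by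
      have h0 : (1 : ℤ) ≤ (N : ℤ) := by exact_mod_cast hN1
      exact one_le_pow₀ h0
    simp [hSdef, Finset.mem_filter, Finset.mem_Icc]
    omega
  set η : ℝ := S.inf' hSne (fun p => |μ * (p.2 : ℝ) - (p.1 : ℝ)|) with hηdef
  have hη : 0 < η := by
    rw [hηdef, Finset.lt_inf'_iff]
    rintro ⟨u, v⟩ hp
    simp only [hSdef, Finset.mem_filter] at hp
    have hv : v ≠ 0 := hp.2
    have hne : μ * (v : ℝ) - (u : ℝ) ≠ 0 := by
      intro h0
      have hvR : (v : ℝ) ≠ 0 := Int.cast_ne_zero.mpr hv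
      have hμeq : μ = (u : ℝ) / (v : ℝ) := by field_simp at h0 ⊢; linarith
      have : ¬ Irrational ((u : ℝ) / (v : ℝ)) := by
        rw [show ((u : ℝ) / (v : ℝ)) = (((u / v : ℚ) : ℝ)) by push_cast; ring]
        exact Rat.not_irrational _
      exact this (hμeq ▸ hμ)
    exact abs_pos.mpr hne
  have hT1 : (1:ℝ) ≤ K / V + K ^ 2 * (|μ| + 1) / η + 1 := by
    have h1 : (0:ℝ) ≤ K / V := by positivity
    have h2 : (0:ℝ) ≤ K ^ 2 * (|μ| + 1) / η := div_nonneg (by positivity) hη.le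
    linarith
  refine ⟨K / V + K ^ 2 * (|μ| + 1) / η + 1, hT1, ?_⟩
  intro P hP α hVα hαW q s a b hq hs
  by_contra hcon
  push_neg at hcon
  -- basic positivity facts
  have hz1 : (0:ℝ) ≤ K / V := by positivity
  have hz2 : (0:ℝ) ≤ K ^ 2 * (|μ| + 1) / η := div_nonneg (by positivity) hη.le
  have hP1 : (1 : ℝ) ≤ P := by linarith
  have hP0 : (0 : ℝ) < P := by linarith
  have hPKV : K / V < P := by linarith
  have hPη : K ^ 2 * (|μ| + 1) / η < P := by linarith
  have hq1 : (1 : ℝ) ≤ (q : ℝ) := by exact_mod_cast hq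
  have hs1 : (1 : ℝ) ≤ (s : ℝ) := by exact_mod_cast hs
  set S1 : ℝ := ⨆ k, |(q : ℝ) * α k - a k| with hS1def
  set S2 : ℝ := ⨆ k, |(s : ℝ) * μ * α k - b k| with hS2def
  have hS1nn : 0 ≤ S1 := aux_sup_abs_nonneg hR _
  have hS2nn : 0 ≤ S2 := aux_sup_abs_nonneg hR _
  have hPd1 : (1 : ℝ) ≤ P ^ d := one_le_pow₀ hP1
  have hPd1' : (1 : ℝ) ≤ P ^ (d - 1) := one_le_pow₀ hP1
  set A : ℝ := (q : ℝ) + P ^ d * S1 with hAdef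
  set B : ℝ := (s : ℝ) + P ^ (d - 1) * S2 with hBdef
  have hPdS1 : 0 ≤ P ^ d * S1 := mul_nonneg (pow_nonneg hP0.le d) hS1nn
  have hPdS2 : 0 ≤ P ^ (d - 1) * S2 := mul_nonneg (pow_nonneg hP0.le (d-1)) hS2nn
  have hA1 : 1 ≤ A := by rw [hAdef]; linarith
  have hB1 : 1 ≤ B := by rw [hBdef]; linarith
  have hApos : 0 < A := by linarith
  have hBpos : 0 < B := by linarith
  have hABpos : 0 < A * B := mul_pos hApos hBpos
  have hAB : A * B < K := by
    have h' : ε < (A * B)⁻¹ := by rwa [← mul_inv] at hcon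
    exact (lt_inv_comm₀ hε hABpos).mp h'
  have hAAB : A ≤ A * B := le_mul_of_one_le_right hApos.le hB1
  have hBAB : B ≤ A * B := le_mul_of_one_le_left hBpos.le hA1
  have hqK : (q : ℝ) ≤ K := by have : (q:ℝ) ≤ A := by rw [hAdef]; linarith
                               linarith
  have hsK : (s : ℝ) ≤ K := by have : (s:ℝ) ≤ B := by rw [hBdef]; linarith
                               linarith
  have hS1K : P ^ d * S1 ≤ K := by have : P ^ d * S1 ≤ A := by rw [hAdef]; linarith
                                   linarith
  have hS2K : P ^ (d - 1) * S2 ≤ K := by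
    have : P ^ (d - 1) * S2 ≤ B := by rw [hBdef]; linarith
    linarith
  have hP2d : P ^ 2 ≤ P ^ d := pow_le_pow_right₀ hP1 hd
  have hP1d : P ≤ P ^ (d - 1) := by
    have h1d : 1 ≤ d - 1 := by omega
    calc P = P ^ 1 := (pow_one P).symm
    _ ≤ P ^ (d - 1) := pow_le_pow_right₀ hP1 h1d
  have hP2pos : (0 : ℝ) < P ^ 2 := by positivity
  have hS1b : S1 ≤ K / P ^ 2 := by
    rw [le_div_iff₀ hP2pos]
    have h5 := mul_le_mul_of_nonneg_left hP2d hS1nn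
    linarith
  have hS2b : S2 ≤ K / P := by
    rw [le_div_iff₀ hP0]
    have h5 := mul_le_mul_of_nonneg_left hP1d hS2nn
    linarith
  -- pick the coordinate achieving the sup of |α|
  obtain ⟨k, hk⟩ : ∃ k, |α k| = ⨆ j, |α j| := exists_eq_ciSup_of_finite
  have hαkV : V ≤ |α k| := hk ▸ hVα
  have hαkW : |α k| ≤ W := hk ▸ hαW
  have he1 : |(q : ℝ) * α k - a k| ≤ K / P ^ 2 := by
    have h9 : |(q : ℝ) * α k - a k| ≤ S1 := by
      exact hS1def ▸ le_ciSup (f := fun j => |(q : ℝ) * α j - a j|) (Set.finite_range _).bddAbove k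
    linarith
  have he2 : |(s : ℝ) * μ * α k - b k| ≤ K / P := by
    have h9 : |(s : ℝ) * μ * α k - b k| ≤ S2 := by
      exact hS2def ▸ le_ciSup (f := fun j => |(s : ℝ) * μ * α j - b j|) (Set.finite_range _).bddAbove k
    linarith
  -- a k ≠ 0
  have habs1 : (q : ℝ) * |α k| - K / P ^ 2 ≤ |(a k : ℝ)| := by
    have := abs_sub_abs_le_abs_sub ((q : ℝ) * α k) (a k : ℝ)
    rw [abs_mul, Nat.abs_cast] at this
    linarith
  have hPP2 : P ≤ P ^ 2 := by
    calc P = P * 1 := (mul_one P).symm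
    _ ≤ P * P := by exact mul_le_mul_of_nonneg_left hP1 hP0.le
    _ = P ^ 2 := (sq P).symm
  have hKP2V : K / P ^ 2 < V := by
    rw [div_lt_iff₀ hP2pos]
    have h6 : K < P * V := by
      rw [div_lt_iff₀ hV] at hPKV
      linarith
    have h7 : P * V ≤ P ^ 2 * V := mul_le_mul_of_nonneg_right hPP2 hV.le
    linarith
  have hak0 : (0 : ℝ) < |(a k : ℝ)| := by
    have h8 : |α k| ≤ (q : ℝ) * |α k| := le_mul_of_one_le_left (abs_nonneg _) hq1
    linarith
  have hakne : a k ≠ 0 := by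
    intro h0; rw [h0] at hak0; simp at hak0
  -- integer bounds
  have haN : |(a k : ℝ)| ≤ (N : ℝ) := by
    have h1 : |(a k : ℝ)| ≤ (q : ℝ) * |α k| + K / P ^ 2 := by
      have := abs_sub_abs_le_abs_sub ((a k : ℝ)) ((q : ℝ) * α k)
      rw [abs_sub_comm] at this
      rw [abs_mul, Nat.abs_cast] at this
      linarith
    have h2 : K / P ^ 2 ≤ K := div_le_self hK.le (one_le_pow₀ hP1)
    have h3 : (q : ℝ) * |α k| ≤ K * W := mul_le_mul hqK hαkW (abs_nonneg _) hK.le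
    have hMx : M = K * |μ| * W + K * |μ| + K * W + K := by rw [hMdef]; ring
    have n1 : 0 ≤ K * |μ| * W := by positivity
    have n2 : 0 ≤ K * |μ| := by positivity
    linarith
  have hbN : |(b k : ℝ)| ≤ (N : ℝ) := by
    have h1 : |(b k : ℝ)| ≤ (s : ℝ) * |μ| * |α k| + K / P := by
      have := abs_sub_abs_le_abs_sub ((b k : ℝ)) ((s : ℝ) * μ * α k)
      rw [abs_sub_comm] at this
      rw [abs_mul, abs_mul, Nat.abs_cast] at this
      linarith
    have h2 : K / P ≤ K := div_le_self hK.le hP1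
    have h3 : (s : ℝ) * |μ| * |α k| ≤ K * |μ| * W :=
      mul_le_mul (mul_le_mul_of_nonneg_right hsK hμ0) hαkW (abs_nonneg _) (by positivity)
    have hMx : M = K * |μ| * W + K * |μ| + K * W + K := by rw [hMdef]; ring
    have n2 : 0 ≤ K * |μ| := by positivity
    have n3 : 0 ≤ K * W := by positivity
    linarith
  have hKM : K ≤ M := by
    have hMx : M = K * |μ| * W + K * |μ| + K * W + K := by rw [hMdef]; ring
    have n1 : 0 ≤ K * |μ| * W := by positivity
    have n2 : 0 ≤ K * |μ| := by positivity
    have n3 : 0 ≤ K * W := by positivity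
    linarith
  have hqN : (q : ℝ) ≤ (N : ℝ) := by linarith
  have hsN : (s : ℝ) ≤ (N : ℝ) := by linarith
  -- the pair (u, v)
  set u : ℤ := (q : ℤ) * b k with hudef
  set v : ℤ := (s : ℤ) * a k with hvdef
  have hvne : v ≠ 0 := mul_ne_zero (by exact_mod_cast hs.ne') hakne
  have haNZ : |a k| ≤ (N : ℤ) := by
    have : ((|a k| : ℤ) : ℝ) ≤ (N : ℝ) := by rwa [Int.cast_abs]
    exact_mod_cast this
  have hbNZ : |b k| ≤ (N : ℤ) := by
    have : ((|b k| : ℤ) : ℝ) ≤ (N : ℝ) := by rwa [Int.cast_abs]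
    exact_mod_cast this
  have hqNZ : (q : ℤ) ≤ (N : ℤ) := by exact_mod_cast hqN
  have hsNZ : (s : ℤ) ≤ (N : ℤ) := by exact_mod_cast hsN
  have hq0Z : (0 : ℤ) ≤ (q : ℤ) := Int.natCast_nonneg q
  have hs0Z : (0 : ℤ) ≤ (s : ℤ) := Int.natCast_nonneg s
  have huN : |u| ≤ (N : ℤ)^2 := by
    rw [hudef, abs_mul, Int.abs_natCast, sq]
    exact mul_le_mul hqNZ hbNZ (abs_nonneg _) (by exact_mod_cast Nat.zero_le N)
  have hvN : |v| ≤ (N : ℤ)^2 := by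
    rw [hvdef, abs_mul, Int.abs_natCast, sq]
    exact mul_le_mul hsNZ haNZ (abs_nonneg _) (by exact_mod_cast Nat.zero_le N)
  have hmem : (u, v) ∈ S := by
    simp only [hSdef, Finset.mem_filter, Finset.mem_product, Finset.mem_Icc]
    refine ⟨⟨?_, ?_⟩, hvne⟩
    · constructor <;> [linarith [neg_abs_le u]; linarith [le_abs_self u]]
    · constructor <;> [linarith [neg_abs_le v]; linarith [le_abs_self v]]
  have hηle : η ≤ |μ * (v : ℝ) - (u : ℝ)| := Finset.inf'_le _ hmem
  -- the key estimate
  have hkey : (μ * (v : ℝ) - (u : ℝ)) =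
      (s : ℝ) * μ * ((a k : ℝ) - (q : ℝ) * α k) + (q : ℝ) * ((s : ℝ) * μ * α k - (b k : ℝ)) := by
    rw [hudef, hvdef]; push_cast; ring
  have hbound : |μ * (v : ℝ) - (u : ℝ)| ≤ (s : ℝ) * |μ| * (K / P ^ 2) + (q : ℝ) * (K / P) := by
    rw [hkey]
    calc |(s : ℝ) * μ * ((a k : ℝ) - (q : ℝ) * α k) + (q : ℝ) * ((s : ℝ) * μ * α k - (b k : ℝ))|
        ≤ |(s : ℝ) * μ * ((a k : ℝ) - (q : ℝ) * α k)| + |(q : ℝ) * ((s : ℝ) * μ * α k - (b k : ℝ))| :=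
          abs_add_le _ _
      _ = (s : ℝ) * |μ| * |(a k : ℝ) - (q : ℝ) * α k| + (q : ℝ) * |(s : ℝ) * μ * α k - (b k : ℝ)| := by
          rw [abs_mul, abs_mul, abs_mul, Nat.abs_cast, Nat.abs_cast]
      _ ≤ (s : ℝ) * |μ| * (K / P ^ 2) + (q : ℝ) * (K / P) := by
          rw [abs_sub_comm]
          have h1 : (0 : ℝ) ≤ (s : ℝ) * |μ| := by positivity
          have h2 : (0 : ℝ) ≤ (q : ℝ) := by positivity
          exact add_le_add (mul_le_mul_of_nonneg_left he1 h1) (mul_le_mul_of_nonneg_left he2 h2)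
  have hfin : (s : ℝ) * |μ| * (K / P ^ 2) + (q : ℝ) * (K / P) < η := by
    have hη' : K ^ 2 * (|μ| + 1) < P * η := by
      rw [div_lt_iff₀ hη] at hPη; linarith
    have hKP2 : K / P ^ 2 ≤ K / P := by
      rw [div_le_div_iff₀ hP2pos hP0]
      have := mul_le_mul_of_nonneg_left hPP2 hK.le
      linarith
    have hKPnn : (0:ℝ) ≤ K / P := div_nonneg hK.le hP0.le
    have hKP2nn : (0:ℝ) ≤ K / P ^ 2 := div_nonneg hK.le (by positivity)
    have e1 : (s : ℝ) * |μ| * (K / P ^ 2) ≤ K * |μ| * (K / P) :=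
      mul_le_mul (mul_le_mul_of_nonneg_right hsK hμ0) hKP2 hKP2nn (by positivity)
    have e2 : (q : ℝ) * (K / P) ≤ K * (K / P) := mul_le_mul_of_nonneg_right hqK hKPnn
    have e3 : K * |μ| * (K / P) + K * (K / P) < η := by
      have h4 : K * |μ| * (K / P) + K * (K / P) = K ^ 2 * (|μ| + 1) / P := by
        field_simp
      rw [h4, div_lt_iff₀ hP0]
      linarith
    linarith
  linarith [hηle, hbound, hfin]

set_option maxHeartbeats 1000000 in
theorem stmt_13 (μ : ℝ) (hμ : Irrational μ) (d R : ℕ) (hd : 2 ≤ d) (hR : 1 ≤ R)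
    (C : ℝ) (hC : 1 ≤ C) (V W : ℝ) (hV : 0 < V) (hVW : V ≤ W) :
    Tendsto
      (fun P : ℝ =>
        sSup {y : ℝ | ∃ α : Fin R → ℝ,
          V ≤ (⨆ k, |α k|) ∧ (⨆ k, |α k|) ≤ W ∧ y = scriptF R d C μ α P})
      atTop (nhds 0) := by
  have hRnon : Nonempty (Fin R) := ⟨⟨0, hR⟩⟩
  rw [Metric.tendsto_atTop]
  intro ε hε
  obtain ⟨T, hT1, hT⟩ := key_bound μ hμ d R hd hR V W hV hVW (ε/2) (by linarith)
  refine ⟨T, fun P hP => ?_⟩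
  have hP1 : (1:ℝ) ≤ P := le_trans hT1 hP
  have hP0 : (0:ℝ) < P := by linarith
  -- inner set facts, for an arbitrary α
  have hinner_ne : ∀ α : Fin R → ℝ,
      Set.Nonempty {x : ℝ | ∃ (q s : ℕ) (a b : Fin R → ℤ), 0 < q ∧ 0 < s ∧ (q : ℝ) ≤ C * s ∧
        x = ((q : ℝ) + P ^ d * ⨆ k, |(q : ℝ) * α k - a k|)⁻¹ *
            ((s : ℝ) + P ^ (d - 1) * ⨆ k, |(s : ℝ) * μ * α k - b k|)⁻¹} := by
    intro α
    exact ⟨_, 1, 1, 0, 0, one_pos, one_pos, by push_cast; linarith, rfl⟩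
  have hx01 : ∀ α : Fin R → ℝ, ∀ x ∈ {x : ℝ | ∃ (q s : ℕ) (a b : Fin R → ℤ),
      0 < q ∧ 0 < s ∧ (q : ℝ) ≤ C * s ∧
      x = ((q : ℝ) + P ^ d * ⨆ k, |(q : ℝ) * α k - a k|)⁻¹ *
          ((s : ℝ) + P ^ (d - 1) * ⨆ k, |(s : ℝ) * μ * α k - b k|)⁻¹},
      0 ≤ x ∧ x ≤ 1 := by
    intro α x hx
    obtain ⟨q, s, a, b, hq, hs, -, rfl⟩ := hx
    have hq1 : (1:ℝ) ≤ (q:ℝ) := by exact_mod_cast hq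
    have hs1 : (1:ℝ) ≤ (s:ℝ) := by exact_mod_cast hs
    have hn1 : 0 ≤ P ^ d * ⨆ k, |(q : ℝ) * α k - a k| :=
      mul_nonneg (pow_nonneg hP0.le d) (aux_sup_abs_nonneg hR _)
    have hn2 : 0 ≤ P ^ (d-1) * ⨆ k, |(s : ℝ) * μ * α k - b k| :=
      mul_nonneg (pow_nonneg hP0.le (d-1)) (aux_sup_abs_nonneg hR _)
    have hA1 : 1 ≤ (q : ℝ) + P ^ d * ⨆ k, |(q : ℝ) * α k - a k| := by linarith
    have hB1 : 1 ≤ (s : ℝ) + P ^ (d - 1) * ⨆ k, |(s : ℝ) * μ * α k - b k| := by linarith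
    have hApos : (0:ℝ) < (q : ℝ) + P ^ d * ⨆ k, |(q : ℝ) * α k - a k| := by linarith
    have hBpos : (0:ℝ) < (s : ℝ) + P ^ (d - 1) * ⨆ k, |(s : ℝ) * μ * α k - b k| := by linarith
    constructor
    · positivity
    · have i1 : ((q : ℝ) + P ^ d * ⨆ k, |(q : ℝ) * α k - a k|)⁻¹ ≤ 1 := by
        rw [inv_le_one_iff₀]; right; exact hA1
      have i2 : ((s : ℝ) + P ^ (d - 1) * ⨆ k, |(s : ℝ) * μ * α k - b k|)⁻¹ ≤ 1 := by
        rw [inv_le_one_iff₀]; right; exact hB1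
      exact mul_le_one₀ i1 (inv_nonneg.mpr hBpos.le) i2
  have hbddInner : ∀ α : Fin R → ℝ, BddAbove {x : ℝ | ∃ (q s : ℕ) (a b : Fin R → ℤ),
      0 < q ∧ 0 < s ∧ (q : ℝ) ≤ C * s ∧
      x = ((q : ℝ) + P ^ d * ⨆ k, |(q : ℝ) * α k - a k|)⁻¹ *
          ((s : ℝ) + P ^ (d - 1) * ⨆ k, |(s : ℝ) * μ * α k - b k|)⁻¹} :=
    fun α => ⟨1, fun x hx => (hx01 α x hx).2⟩
  have hscript_nonneg : ∀ α : Fin R → ℝ, 0 ≤ scriptF R d C μ α P := by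
    intro α
    obtain ⟨x, hx⟩ := hinner_ne α
    have h0 := (hx01 α x hx).1
    have : x ≤ scriptF R d C μ α P := le_csSup (hbddInner α) hx
    linarith
  -- outer set facts
  set O : Set ℝ := {y : ℝ | ∃ α : Fin R → ℝ,
      V ≤ (⨆ k, |α k|) ∧ (⨆ k, |α k|) ≤ W ∧ y = scriptF R d C μ α P} with hOdef
  have hsupV : (⨆ k : Fin R, |(fun _ => V : Fin R → ℝ) k|) = V := by
    simp only []
    rw [ciSup_const, abs_of_pos hV]
  have hmemV : scriptF R d C μ (fun _ => V) P ∈ O :=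
    ⟨fun _ => V, by rw [hsupV], by rw [hsupV]; exact hVW, rfl⟩
  have hOne : O.Nonempty := ⟨_, hmemV⟩
  have hOub : ∀ y ∈ O, y ≤ ε / 2 := by
    rintro y ⟨α, hVα, hαW, rfl⟩
    rw [scriptF]
    refine csSup_le (hinner_ne α) ?_
    rintro x ⟨q, s, a, b, hq, hs, hqs, rfl⟩
    exact hT P hP α hVα hαW q s a b hq hs
  have hObdd : BddAbove O := ⟨ε / 2, fun y hy => hOub y hy⟩
  have hOpos : 0 ≤ sSup O :=
    le_trans (hscript_nonneg _) (le_csSup hObdd hmemV)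
  have hOle : sSup O ≤ ε / 2 := csSup_le hOne hOub
  rw [Real.dist_eq, sub_zero, abs_of_nonneg hOpos]
  linarith
end
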